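/- Let L = (T_1,…,T_ℓ,S) be a tuple as in the setting satisfying the explicit conditions (H), (H'), (S), (T1), (T2), (G). If T_i has residuum 1 (that is, T_i is of type 2 or type 3), then the tail root of T_i is a slot; in other words, the value one larger than the tail root of T_i does not occur in the left column of T_i. -/

import Mathlib

namespace OrthoBij

/-- `lev s i = #i(s) - #(-i)(s)` as an integer. -/
def lev (s : List ℤ) (i : ℤ) : ℤ := (s.count i : ℤ) - (s.count (-i) : ℤ)

/-- A vacillating tableau of dimension `k`: a word with letters in `{-k,…,k}` such that
every prefix satisfies the three conditions. -/
def IsVacillating (k : ℕ) (w : List ℤ) : Prop :=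
  (∀ a ∈ w, -(k : ℤ) ≤ a ∧ a ≤ (k : ℤ)) ∧
  ∀ s : List ℤ, s <+: w →
    (∀ i : ℤ, 1 ≤ i → i ≤ (k : ℤ) → 0 ≤ lev s i) ∧
    (∀ i : ℤ, 1 ≤ i → i + 1 ≤ (k : ℤ) → lev s (i + 1) ≤ lev s i) ∧
    (s.getLast? = some 0 → 0 < lev s (k : ℤ))

/-- The shape of the vacillating tableau is the empty partition. -/
def EmptyShape (k : ℕ) (w : List ℤ) : Prop :=
  ∀ i : ℤ, 1 ≤ i → i ≤ (k : ℤ) → lev w i = 0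

/-- Membership in `W(k,r)`: vacillating tableaux of dimension `k`, length `r`, shape `∅`. -/
def WMem (k r : ℕ) (w : List ℤ) : Prop :=
  IsVacillating k w ∧ w.length = r ∧ EmptyShape k w

/-- A filling of a Young diagram. -/
structure Tableau where
  shape : YoungDiagram
  entry : ℕ → ℕ → ℕ

/-- A standard Young tableau: an injective filling of the diagram with the numbers
`1,…,card`, strictly increasing along rows and columns, zero outside the diagram. -/
def IsSYT (Q : Tableau) : Prop :=
  (∀ i j, (i, j) ∉ Q.shape → Q.entry i j = 0) ∧
  (∀ i j, (i, j) ∈ Q.shape → 1 ≤ Q.entry i j ∧ Q.entry i j ≤ Q.shape.card) ∧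
  (∀ i j i' j', (i, j) ∈ Q.shape → (i', j') ∈ Q.shape →
      Q.entry i j = Q.entry i' j' → (i, j) = (i', j')) ∧
  (∀ i j₁ j₂, j₁ < j₂ → (i, j₂) ∈ Q.shape → Q.entry i j₁ < Q.entry i j₂) ∧
  (∀ i₁ i₂ j, i₁ < i₂ → (i₂, j) ∈ Q.shape → Q.entry i₁ j < Q.entry i₂ j)

/-- The shape has at most `2k+1` rows, all of even length. -/
def EvenRows (k : ℕ) (Q : Tableau) : Prop :=
  (∀ i, 2 * k + 1 ≤ i → Q.shape.rowLen i = 0) ∧ ∀ i, Even (Q.shape.rowLen i)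

/-- Membership in `E(k,r)`: standard Young tableaux with `r` entries whose shape has at
most `2k+1` rows, all of even length. -/
def EMem (k r : ℕ) (Q : Tableau) : Prop :=
  IsSYT Q ∧ Q.shape.card = r ∧ EvenRows k Q

/-- A partition, as a weakly decreasing list of positive integers. -/
def IsPartitionL (μ : List ℕ) : Prop :=
  μ.Pairwise (· ≥ ·) ∧ ∀ x ∈ μ, 0 < x

end OrthoBij

namespace OrthoBij

/-- A two-column skew tableau: inner-shape parameter `a`, right-column length `b`,
left column `left` and right column `right`, both listed from top to bottom.
The left column occupies rows `a, a+1, …` and the right column rows `0, 1, …, b-1`. -/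
structure TwoCol where
  a : ℕ
  b : ℕ
  left : List ℕ
  right : List ℕ

instance : Inhabited TwoCol := ⟨⟨0, 0, [], []⟩⟩

/-- The `i`-th entry of a column, counted from the bottom (`1`-based). -/
def botGet (c : List ℕ) (i : ℕ) : ℕ := c.getD (c.length - i) 0

/-- Row-semistandardness of `T` after sliding the right column down by `s` rows:
whenever the right cell number `t` (now in row `s + t`) has a left neighbour, the left
neighbour is not larger. -/
def SlidOK (T : TwoCol) (s : ℕ) : Prop :=
  ∀ t, t < T.right.length → T.a ≤ s + t → s + t - T.a < T.left.length →
    T.left.getD (s + t - T.a) 0 ≤ T.right.getD t 0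

/-- The residuum of `T` (with tail length `m`): the maximal number of positions the
right column can be slid down while keeping a semistandard skew tableau. -/
noncomputable def residuum (T : TwoCol) (m : ℕ) : ℕ :=
  sSup {s | s ≤ min T.a m ∧ SlidOK T s}

/-- `T` is a valid two-column skew semistandard tableau of shape
`(2^b, 1^m)/(1^a)` with `b ≥ a ≥ 0` both even and residuum at most `1`. -/
def IsTwoCol (m : ℕ) (T : TwoCol) : Prop :=
  Even T.a ∧ Even T.b ∧ T.a ≤ T.b ∧
  T.left.length = T.b - T.a + m ∧ T.right.length = T.b ∧
  (∀ x ∈ T.left, 0 < x) ∧ (∀ x ∈ T.right, 0 < x) ∧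
  T.left.Pairwise (· < ·) ∧ T.right.Pairwise (· < ·) ∧
  SlidOK T 0 ∧ residuum T m ≤ 1

/-- The tail of `T`: the bottom `m` entries of the left column. -/
def tailOf (T : TwoCol) : List ℕ := T.left.drop (T.b - T.a)

/-- The tail root of `T`: the topmost tail entry. -/
def tailRoot (T : TwoCol) : ℕ := T.left.getD (T.b - T.a) 0

/-- The lower tail of `T`: the tail without the tail root. -/
def lowerTail (T : TwoCol) : List ℕ := T.left.drop (T.b - T.a + 1)

/-- The fin of `T`: the largest (bottom) entry of the right column. -/
def finOf (T : TwoCol) : ℕ := botGet T.right 1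

/-- `x` occurs as a gap in the (strictly increasing) column `col`. -/
def IsGapIn (col : List ℕ) (x : ℕ) : Prop := x ∈ col ∧ 1 < x ∧ (x - 1) ∉ col

/-- `x` occurs as a slot in the column `col`. -/
def IsSlotIn (col : List ℕ) (x : ℕ) : Prop := x ∈ col ∧ (x + 1) ∉ col

/-- `T` is of type 1: residuum `0` and all gaps lie in the tail. -/
def Type1 (m : ℕ) (T : TwoCol) : Prop :=
  residuum T m = 0 ∧ (∀ x, ¬ IsGapIn T.right x) ∧
  ∀ x, IsGapIn T.left x → x ∈ tailOf T

/-- `T` is of type 2: residuum `1` and all gaps lie in the lower tail. -/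
def Type2 (m : ℕ) (T : TwoCol) : Prop :=
  residuum T m = 1 ∧ (∀ x, ¬ IsGapIn T.right x) ∧
  ∀ x, IsGapIn T.left x → x ∈ lowerTail T

/-- `T` is of type 3: residuum `1`, the fin is a gap, and all other gaps lie in the
lower tail. -/
def Type3 (m : ℕ) (T : TwoCol) : Prop :=
  residuum T m = 1 ∧ IsGapIn T.right (finOf T) ∧
  (∀ x, IsGapIn T.right x → x = finOf T) ∧
  ∀ x, IsGapIn T.left x → x ∈ lowerTail T

/-- A skew semistandard tableau of rectangular outer shape, recorded by its columns
(from left to right, each from top to bottom, bottom-aligned in the rectangle). -/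
structure RectCols where
  cols : List (List ℕ)

/-- Validity of such a tableau with `c` columns, all of the same length parity. -/
def IsRect (c : ℕ) (S : RectCols) : Prop :=
  S.cols.length = c ∧
  (∀ col ∈ S.cols, col.Pairwise (· < ·) ∧ ∀ x ∈ col, 0 < x) ∧
  (∀ t, t + 1 < c → (S.cols.getD t []).length ≤ (S.cols.getD (t + 1) []).length) ∧
  (∀ t u, t < c → u < c →
      (S.cols.getD t []).length % 2 = (S.cols.getD u []).length % 2) ∧
  (∀ t i, t + 1 < c → 1 ≤ i → i ≤ (S.cols.getD t []).length →
      botGet (S.cols.getD t []) i ≤ botGet (S.cols.getD (t + 1) []) i)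

/-- The leftmost column `S^L` of `S`. -/
def SL (S : RectCols) : List ℕ := S.cols.getD 0 []

/-- `S` is even: its columns have even length. -/
def SEven (S : RectCols) : Prop := (SL S).length % 2 = 0

/-- A tuple `L = (T₁, …, T_ℓ, S)`. -/
structure KTupleData where
  Ts : List TwoCol
  S : RectCols

/-- The `j`-th two-column tableau of the tuple (`0`-based). -/
def TAt (d : KTupleData) (j : ℕ) : TwoCol := d.Ts.getD j default

/-- The residuum `r_j` of the `j`-th tableau. -/
noncomputable def resAt (μ : List ℕ) (d : KTupleData) (j : ℕ) : ℕ :=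
  residuum (TAt d j) (μ.getD j 0)

/-- Structural validity of the tuple for `SO(2k+1)` and the partition `μ`. -/
def IsKTuple (k : ℕ) (μ : List ℕ) (d : KTupleData) : Prop :=
  d.Ts.length = μ.length ∧
  (∀ j, j < μ.length → IsTwoCol (μ.getD j 0) (TAt d j)) ∧
  IsRect (2 * k + 1 - 2 * μ.length) d.S

/-- All columns of the tuple, ordered from left to right. -/
def colListOf (d : KTupleData) : List (List ℕ) :=
  (d.Ts.map (fun T => [T.left, T.right])).flatten ++ d.S.cols

/-- Condition (H). -/
noncomputable def CondH (μ : List ℕ) (d : KTupleData) : Prop :=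
  ∀ i, i + 1 < μ.length →
    (TAt d i).b ≤ (TAt d (i + 1)).b - (TAt d (i + 1)).a +
      2 * resAt μ d i * resAt μ d (i + 1)

/-- Condition (H'). -/
noncomputable def CondH' (μ : List ℕ) (d : KTupleData) : Prop :=
  0 < μ.length →
    (SEven d.S → (TAt d (μ.length - 1)).b ≤ (SL d.S).length) ∧
    (¬ SEven d.S →
      (TAt d (μ.length - 1)).b ≤ (SL d.S).length - 1 + 2 * resAt μ d (μ.length - 1))

/-- Condition (S): `S` contains no gap. -/
def CondS (d : KTupleData) : Prop :=
  ∀ col ∈ d.S.cols, ∀ x, ¬ IsGapIn col x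

/-- Condition (T1) without its final (tail-root) clause. -/
noncomputable def CondT1noTR (μ : List ℕ) (d : KTupleData) : Prop :=
  (∀ i, i < μ.length →
      Type1 (μ.getD i 0) (TAt d i) ∨ Type2 (μ.getD i 0) (TAt d i) ∨
        Type3 (μ.getD i 0) (TAt d i)) ∧
  (∀ i, i + 1 < μ.length → Type3 (μ.getD i 0) (TAt d i) →
      resAt μ d (i + 1) = 1 ∧ finOf (TAt d i) ≤ finOf (TAt d (i + 1))) ∧
  (0 < μ.length → Type3 (μ.getD (μ.length - 1) 0) (TAt d (μ.length - 1)) →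
      ¬ SEven d.S)

/-- The tail-root clause of condition (T1). -/
noncomputable def CondT1TR (μ : List ℕ) (d : KTupleData) : Prop :=
  0 < μ.length → Type1 (μ.getD (μ.length - 1) 0) (TAt d (μ.length - 1)) →
    ¬ SEven d.S → tailRoot (TAt d (μ.length - 1)) ≤ botGet (SL d.S) 1

/-- Condition (T1). -/
noncomputable def CondT1 (μ : List ℕ) (d : KTupleData) : Prop :=
  CondT1noTR μ d ∧ CondT1TR μ d

/-- Condition (T2): the tails, placed side by side with tops aligned, form a
semistandard Young tableau. -/
def CondT2 (μ : List ℕ) (d : KTupleData) : Prop :=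
  ∀ i t, i + 1 < μ.length → t < (tailOf (TAt d (i + 1))).length →
    (tailOf (TAt d i)).getD t 0 ≤ (tailOf (TAt d (i + 1))).getD t 0

/-- Condition (G): for every value `x` there is an injection from the occurrences of
`x` as a gap to the occurrences of `x - 1` as a slot, each gap being assigned a slot
occurrence in a column strictly to its right. -/
def CondG (d : KTupleData) : Prop :=
  ∀ x : ℕ,
    ∃ f : {c : ℕ // c < (colListOf d).length ∧ IsGapIn ((colListOf d).getD c []) x} →
        {c : ℕ // c < (colListOf d).length ∧ IsSlotIn ((colListOf d).getD c []) (x - 1)},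
      Function.Injective f ∧
        ∀ c : {c : ℕ // c < (colListOf d).length ∧
            IsGapIn ((colListOf d).getD c []) x}, c.val < (f c).val

/-- `L` has content `λ`: the letter `x` occurs exactly `λ'_x` times altogether, where
`λ'` is the conjugate partition. -/
def CondContent (lam : List ℕ) (d : KTupleData) : Prop :=
  ∀ x : ℕ, 1 ≤ x →
    ((colListOf d).map (fun col => col.count x)).sum =
      lam.countP (fun y => decide (x ≤ y))

end OrthoBij

/-!
If `T` has residuum `1`, then it is of type 2 or 3, so all gaps of its left column lie in the
lower tail: the left column starts `1, 2, …, q + 1` with the tail root `q + 1` in position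
`q = b - a`, and `a ≥ 2` since `a` is even and `1 ≤ residuum ≤ a`. Were `q + 2` in the left
column, it would have to sit right below the tail root, and the right column (whose `t`-th
entry is at least `t + 1`) could then be slid down by two positions, forcing residuum `≥ 2`.
-/

namespace List

variable {l : List ℕ}

theorem SortedLT.succ_le_getElem (hl : l.SortedLT) (hpos : ∀ x ∈ l, 0 < x) :
    ∀ (j : ℕ) (hj : j < l.length), j + 1 ≤ l[j]
  | 0, hj => hpos _ (getElem_mem hj)
  | j + 1, hj =>
    (hl.succ_le_getElem hpos j (by omega)).trans_lt (hl.getElem_lt_getElem_iff.2 (by omega))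

theorem SortedLT.getElem_succ_eq_of_succ_mem (hl : l.SortedLT) {q : ℕ} (hq : q < l.length)
    (h : l[q] + 1 ∈ l) : ∃ hq' : q + 1 < l.length, l[q + 1] = l[q] + 1 := by
  obtain ⟨n, hn, hval⟩ := mem_iff_getElem.1 h
  have hqn : q < n := hl.getElem_lt_getElem_iff.1 (show l[q] < l[n] by omega)
  have hq' : q + 1 < l.length := by omega
  have hle : l[q + 1] ≤ l[n] := hl.getElem_le_getElem_iff.2 hqn
  have hlt : l[q] < l[q + 1] := hl.getElem_lt_getElem_iff.2 (Nat.lt_succ_self q)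
  exact ⟨hq', by omega⟩

end List

namespace OrthoBij

open List

theorem getElem_eq_succ_of_gaps_mem_drop {l : List ℕ} (hl : l.SortedLT)
    (hpos : ∀ x ∈ l, 0 < x) {p : ℕ} (hgap : ∀ x, IsGapIn l x → x ∈ l.drop p)
    (j : ℕ) (hj : j < l.length) (hjp : j < p) : l[j] = j + 1 := by
  induction j using Nat.strong_induction_on with
  | _ j ih =>
  by_contra hne
  have hgt : j + 1 < l[j] := lt_of_le_of_ne (hl.succ_le_getElem hpos j hj) (Ne.symm hne)
  have hpred : l[j] - 1 ∉ l := by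
    intro hmem
    obtain ⟨n, hn, hval⟩ := mem_iff_getElem.1 hmem
    rcases lt_or_ge n j with hnj | hjn
    · have := ih n hnj hn (hnj.trans hjp)
      omega
    · have : l[j] ≤ l[n] := hl.getElem_le_getElem_iff.2 hjn
      omega
  obtain ⟨n, hn, hval⟩ := mem_iff_getElem.1 (hgap _ ⟨getElem_mem hj, by omega, hpred⟩)
  rw [getElem_drop] at hval
  have : l[j] < l[p + n]'(by rw [length_drop] at hn; omega) :=
    hl.getElem_lt_getElem_iff.2 (by omega)
  omega

theorem residuum_le_min (T : TwoCol) (m : ℕ) : residuum T m ≤ min T.a m :=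
  csSup_le' fun _ hs => hs.1

theorem le_residuum {T : TwoCol} {m s : ℕ} (hs : s ≤ min T.a m) (hslid : SlidOK T s) :
    s ≤ residuum T m :=
  le_csSup ⟨min T.a m, fun _ h => h.1⟩ ⟨hs, hslid⟩

theorem slidOK_of_left_getElem_eq_succ {T : TwoCol} {s : ℕ} (hs : s ≤ T.a)
    (hr : T.right.SortedLT) (hrpos : ∀ x ∈ T.right, 0 < x) (hrlen : T.right.length = T.b)
    (hleft : ∀ j (hj : j < T.left.length), j < T.b - T.a + s → T.left[j] = j + 1) :
    SlidOK T s := by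
  intro t ht hat hlt
  rw [getD_eq_getElem _ _ hlt, getD_eq_getElem _ _ ht, hleft _ hlt (by omega)]
  have := hr.succ_le_getElem hrpos t ht
  omega

theorem tailRoot_succ_not_mem_left {m : ℕ} {T : TwoCol} (hT : IsTwoCol m T)
    (hres : residuum T m = 1) (hgap : ∀ x, IsGapIn T.left x → x ∈ lowerTail T) :
    tailRoot T + 1 ∉ T.left := by
  obtain ⟨⟨c, hc⟩, -, -, hllen, hrlen, hlpos, hrpos, hlsort, hrsort, -, -⟩ := hT
  have hmin := residuum_le_min T m
  have hq : T.b - T.a < T.left.length := by omega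
  have hprefix : ∀ j (hj : j < T.left.length), j < T.b - T.a + 1 → T.left[j] = j + 1 :=
    getElem_eq_succ_of_gaps_mem_drop hlsort.sortedLT hlpos hgap
  intro hmem
  rw [tailRoot, getD_eq_getElem _ _ hq] at hmem
  obtain ⟨hq', hnext⟩ := hlsort.sortedLT.getElem_succ_eq_of_succ_mem hq hmem
  have hslid : SlidOK T 2 := by
    refine slidOK_of_left_getElem_eq_succ (by omega) hrsort.sortedLT hrpos hrlen ?_
    intro j hj hjq
    rcases Nat.lt_succ_iff_lt_or_eq.1 (show j < T.b - T.a + 2 by omega) with hlt | rfl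
    · exact hprefix j hj hlt
    · rw [hnext, hprefix _ hq (Nat.lt_succ_self _)]
  have := le_residuum (m := m) (by omega) hslid
  omega

theorem CondT1noTR.left_gaps_mem_lowerTail {μ : List ℕ} {d : KTupleData}
    (h : CondT1noTR μ d) {i : ℕ} (hi : i < μ.length) (hres : resAt μ d i = 1) :
    ∀ x, IsGapIn (TAt d i).left x → x ∈ lowerTail (TAt d i) := by
  rcases h.1 i hi with h1 | h2 | h3
  · exact absurd (h1.1.symm.trans hres) zero_ne_one
  · exact h2.2.2
  · exact h3.2.2.2

end OrthoBij

open OrthoBij in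
theorem statement13_general (k : ℕ) (μ : List ℕ)
    (d : KTupleData) (hd : IsKTuple k μ d)
    (hT1 : CondT1 μ d) :
    ∀ i, i < μ.length → resAt μ d i = 1 →
      (tailRoot (TAt d i) + 1) ∉ (TAt d i).left :=
  fun i hi hres =>
    tailRoot_succ_not_mem_left (hd.2.1 i hi) hres (hT1.1.left_gaps_mem_lowerTail hi hres)

open OrthoBij in
/-- Let `L = (T₁, …, T_ℓ, S)` be a structurally valid tuple satisfying
the explicit conditions (H), (H'), (S), (T1), (T2), (G).  If `T_i` has residuum `1`, then
its tail root is a slot: the value one larger than the tail root does not occur in the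
left column of `T_i`. -/
theorem statement13 (k : ℕ) (hk : 1 ≤ k) (μ : List ℕ)
    (hμ : IsPartitionL μ) (hμk : μ.length ≤ k)
    (d : KTupleData) (hd : IsKTuple k μ d)
    (hH : CondH μ d) (hH' : CondH' μ d) (hS : CondS d)
    (hT1 : CondT1 μ d) (hT2 : CondT2 μ d) (hG : CondG d) :
    ∀ i, i < μ.length → resAt μ d i = 1 →
      (tailRoot (TAt d i) + 1) ∉ (TAt d i).left :=
  statement13_general k μ d hd hT1
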